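/- arXiv:1701.06010 — 4 statements merged into one kernel-verified Lean document; each statement's English description precedes it below -/
import Mathlib

section
/- For every c > 0 and 0 < γ ≤ 1, the function t ↦ exp(-c t^γ) is completely monotone on (0,∞). -/
def CompletelyMonotone (g : ℝ → ℝ) : Prop :=
  (∀ t : ℝ, 0 < t → ContDiffAt ℝ (⊤ : ℕ∞) g t) ∧
  ∀ (n : ℕ) (t : ℝ), 0 < t → 0 ≤ (-1 : ℝ) ^ n * iteratedDeriv n g t

def BernsteinFunction (f : ℝ → ℝ) : Prop :=
  (∀ t : ℝ, 0 < t → 0 < f t) ∧ CompletelyMonotone (deriv f)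

/-- Coefficients in the expansion of the iterated derivatives of `exp (-c t^γ)`. -/
noncomputable def aCoef (γ : ℝ) : ℕ → ℕ → ℝ
  | 0, 0 => 1
  | 0, _+1 => 0
  | n+1, 0 => (n : ℝ) * aCoef γ n 0
  | n+1, k+1 => γ * aCoef γ n k + ((n : ℝ) - ((k : ℝ) + 1) * γ) * aCoef γ n (k+1)

lemma aCoef_eq_zero (γ : ℝ) : ∀ n k : ℕ, n < k → aCoef γ n k = 0
  | 0, k+1, _ => by simp [aCoef]
  | n+1, k+1, h => by
      simp [aCoef, aCoef_eq_zero γ n k (by omega), aCoef_eq_zero γ n (k+1) (by omega)]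

lemma aCoef_nonneg {γ : ℝ} (hγ0 : 0 < γ) (hγ1 : γ ≤ 1) : ∀ n k : ℕ, 0 ≤ aCoef γ n k
  | 0, 0 => by simp [aCoef]
  | 0, k+1 => by simp [aCoef]
  | n+1, 0 => by
      simpa [aCoef] using mul_nonneg (Nat.cast_nonneg n) (aCoef_nonneg hγ0 hγ1 n 0)
  | n+1, k+1 => by
      rw [aCoef]
      apply add_nonneg (mul_nonneg hγ0.le (aCoef_nonneg hγ0 hγ1 n k))
      rcases le_or_gt (k+1) n with h | h
      · apply mul_nonneg _ (aCoef_nonneg hγ0 hγ1 n (k+1))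
        have h1 : ((k : ℝ) + 1) * γ ≤ (k : ℝ) + 1 := by nlinarith [Nat.cast_nonneg (α := ℝ) k]
        have h2 : ((k : ℝ) + 1) ≤ (n : ℝ) := by exact_mod_cast h
        linarith
      · simp [aCoef_eq_zero γ n (k+1) h]

/-- The key recurrence identity for the sums. -/
lemma key_sum (c γ : ℝ) (n : ℕ) (t : ℝ) (ht : 0 < t) :
    ∑ k ∈ Finset.range (n+2), aCoef γ (n+1) k * c ^ k * t ^ ((k : ℝ) * γ - ((n : ℝ) + 1))
      = c * γ * t ^ (γ - 1) *
          ∑ k ∈ Finset.range (n+1), aCoef γ n k * c ^ k * t ^ ((k : ℝ) * γ - (n : ℝ))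
        - ∑ k ∈ Finset.range (n+1), aCoef γ n k * c ^ k *
            (((k : ℝ) * γ - (n : ℝ)) * t ^ ((k : ℝ) * γ - (n : ℝ) - 1)) := by
  have hA : ∑ k ∈ Finset.range (n+2), aCoef γ (n+1) k * c ^ k * t ^ ((k : ℝ) * γ - ((n : ℝ) + 1))
      = (∑ k ∈ Finset.range (n+1),
          γ * aCoef γ n k * c ^ (k+1) * t ^ (((k : ℝ) + 1) * γ - ((n : ℝ) + 1)))
        + ∑ k ∈ Finset.range (n+1),
            ((n : ℝ) - (k : ℝ) * γ) * aCoef γ n k * c ^ k * t ^ ((k : ℝ) * γ - ((n : ℝ) + 1)) := by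
    rw [Finset.sum_range_succ']
    have h2 : ∑ k ∈ Finset.range (n+1),
        ((n : ℝ) - (k : ℝ) * γ) * aCoef γ n k * c ^ k * t ^ ((k : ℝ) * γ - ((n : ℝ) + 1))
        = (∑ k ∈ Finset.range n,
            ((n : ℝ) - ((k : ℝ)+1) * γ) * aCoef γ n (k+1) * c ^ (k+1) *
              t ^ (((k : ℝ)+1) * γ - ((n : ℝ) + 1)))
          + ((n : ℝ)) * aCoef γ n 0 * c ^ 0 * t ^ ((0 : ℝ) * γ - ((n : ℝ) + 1)) := by
      rw [Finset.sum_range_succ']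
      push_cast
      norm_num
    rw [h2]
    have h3 : ∑ k ∈ Finset.range n,
        ((n : ℝ) - ((k : ℝ)+1) * γ) * aCoef γ n (k+1) * c ^ (k+1) *
          t ^ (((k : ℝ)+1) * γ - ((n : ℝ) + 1))
        = ∑ k ∈ Finset.range (n+1),
            ((n : ℝ) - ((k : ℝ)+1) * γ) * aCoef γ n (k+1) * c ^ (k+1) *
              t ^ (((k : ℝ)+1) * γ - ((n : ℝ) + 1)) := by
      rw [Finset.sum_range_succ, aCoef_eq_zero γ n (n+1) (by omega)]
      ring
    rw [h3]
    have h0 : aCoef γ (n+1) 0 * c ^ 0 * t ^ (((0:ℕ) : ℝ) * γ - ((n : ℝ) + 1))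
        = (n : ℝ) * aCoef γ n 0 * c ^ 0 * t ^ ((0 : ℝ) * γ - ((n : ℝ) + 1)) := by
      rw [aCoef]; push_cast; ring
    have hterm : ∀ k ∈ Finset.range (n+1),
        aCoef γ (n+1) (k+1) * c ^ (k+1) * t ^ (((k+1 : ℕ) : ℝ) * γ - ((n : ℝ) + 1))
          = γ * aCoef γ n k * c ^ (k+1) * t ^ (((k : ℝ) + 1) * γ - ((n : ℝ) + 1))
            + ((n : ℝ) - ((k : ℝ) + 1) * γ) * aCoef γ n (k+1) * c ^ (k+1) *
                t ^ (((k : ℝ) + 1) * γ - ((n : ℝ) + 1)) := by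
      intro k _
      rw [aCoef]
      push_cast
      ring
    rw [Finset.sum_congr rfl hterm, Finset.sum_add_distrib, h0]
    ring
  rw [hA, Finset.mul_sum, ← Finset.sum_sub_distrib, ← Finset.sum_add_distrib]
  apply Finset.sum_congr rfl
  intro k _
  have e1 : t ^ (((k : ℝ) + 1) * γ - ((n : ℝ) + 1)) = t ^ (γ - 1) * t ^ ((k : ℝ) * γ - (n : ℝ)) := by
    rw [← Real.rpow_add ht]; ring_nf
  have e2 : t ^ ((k : ℝ) * γ - ((n : ℝ) + 1)) = t ^ ((k : ℝ) * γ - (n : ℝ) - 1) := by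
    ring_nf
  rw [e1, e2]
  ring

lemma iteratedDeriv_exp_neg_rpow (c γ : ℝ) (n : ℕ) :
    ∀ t : ℝ, 0 < t →
      iteratedDeriv n (fun t => Real.exp (-c * t ^ γ)) t
        = (-1 : ℝ) ^ n * Real.exp (-c * t ^ γ) *
            ∑ k ∈ Finset.range (n+1), aCoef γ n k * c ^ k * t ^ ((k : ℝ) * γ - (n : ℝ)) := by
  induction n with
  | zero =>
      intro t ht
      simp [aCoef, Real.rpow_natCast]
  | succ n ih =>
      intro t ht
      have heq : iteratedDeriv n (fun t => Real.exp (-c * t ^ γ))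
          =ᶠ[nhds t] fun x => (-1 : ℝ) ^ n * Real.exp (-c * x ^ γ) *
            ∑ k ∈ Finset.range (n+1), aCoef γ n k * c ^ k * x ^ ((k : ℝ) * γ - (n : ℝ)) := by
        filter_upwards [isOpen_Ioi.mem_nhds ht] with x hx
        exact ih x hx
      have heq2 : iteratedDeriv n (fun t => Real.exp (-c * t ^ γ))
          =ᶠ[nhds t] fun x => (-1 : ℝ) ^ n * (Real.exp (-c * x ^ γ) *
            ∑ k ∈ Finset.range (n+1), aCoef γ n k * c ^ k * x ^ ((k : ℝ) * γ - (n : ℝ))) := by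
        filter_upwards [isOpen_Ioi.mem_nhds ht] with x hx
        rw [ih x hx, mul_assoc]
      rw [iteratedDeriv_succ, heq2.deriv_eq]
      have hE : HasDerivAt (fun x : ℝ => Real.exp (-c * x ^ γ))
          (Real.exp (-c * t ^ γ) * (-c * (γ * t ^ (γ - 1)))) t :=
        ((Real.hasDerivAt_rpow_const (Or.inl ht.ne')).const_mul (-c)).exp
      have hS : HasDerivAt (fun x : ℝ => ∑ k ∈ Finset.range (n+1),
            aCoef γ n k * c ^ k * x ^ ((k : ℝ) * γ - (n : ℝ)))
          (∑ k ∈ Finset.range (n+1), aCoef γ n k * c ^ k *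
            (((k : ℝ) * γ - (n : ℝ)) * t ^ ((k : ℝ) * γ - (n : ℝ) - 1))) t :=
        HasDerivAt.fun_sum fun k _ =>
          (Real.hasDerivAt_rpow_const (Or.inl ht.ne')).const_mul _
      have hF := (hE.fun_mul hS).const_mul ((-1 : ℝ) ^ n)
      rw [hF.deriv]
      have hkey := key_sum c γ n t ht
      have hcast : ∑ k ∈ Finset.range (n+1+1), aCoef γ (n+1) k * c ^ k *
            t ^ ((k : ℝ) * γ - ((n+1 : ℕ) : ℝ))
          = ∑ k ∈ Finset.range (n+2), aCoef γ (n+1) k * c ^ k *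
            t ^ ((k : ℝ) * γ - ((n : ℝ) + 1)) := by
        push_cast
        norm_num
      rw [hcast, hkey]
      ring

/-- For `c > 0` and `0 < γ ≤ 1`, the function `t ↦ exp(-c t^γ)` is completely
monotone on `(0,∞)`. -/
theorem exp_neg_rpow_completelyMonotone (c γ : ℝ) (hc : 0 < c) (hγ0 : 0 < γ)
    (hγ1 : γ ≤ 1) :
    CompletelyMonotone (fun t => Real.exp (-c * t ^ γ)) := by
  constructor
  · intro t ht
    exact Real.contDiff_exp.contDiffAt.comp t
      ((contDiffAt_const.mul (Real.contDiffAt_rpow_const_of_ne ht.ne')))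
  · intro n t ht
    rw [iteratedDeriv_exp_neg_rpow c γ n t ht]
    have h1 : (-1 : ℝ) ^ n * ((-1 : ℝ) ^ n * Real.exp (-c * t ^ γ) *
        ∑ k ∈ Finset.range (n+1), aCoef γ n k * c ^ k * t ^ ((k : ℝ) * γ - (n : ℝ)))
        = Real.exp (-c * t ^ γ) *
          ∑ k ∈ Finset.range (n+1), aCoef γ n k * c ^ k * t ^ ((k : ℝ) * γ - (n : ℝ)) := by
      rw [← mul_assoc, ← mul_assoc, ← mul_pow]
      norm_num
    rw [h1]
    apply mul_nonneg (Real.exp_nonneg _)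
    apply Finset.sum_nonneg
    intro k _
    exact mul_nonneg (mul_nonneg (aCoef_nonneg hγ0 hγ1 n k) (pow_nonneg hc.le k))
      (Real.rpow_nonneg ht.le _)
end

section
/- For every c > 0, 0 < γ ≤ 1 and ν > 0, the function t ↦ (1 + c t^γ)^(-ν) is completely monotone on (0,∞). -/
namespace OneAddRpowCM

/-- Value of a list of terms `(A, a, b) ↦ A * t^a * (1 + c t^γ)^b`. -/
noncomputable def F (c γ : ℝ) (L : List (ℝ × ℝ × ℝ)) (t : ℝ) : ℝ :=
  (L.map (fun p => p.1 * t ^ p.2.1 * (1 + c * t ^ γ) ^ p.2.2)).sum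

/-- Formal derivative-with-sign-flip of a term list. -/
noncomputable def dL (c γ : ℝ) (L : List (ℝ × ℝ × ℝ)) : List (ℝ × ℝ × ℝ) :=
  L.flatMap (fun p =>
    [(p.1 * (-p.2.1), p.2.1 - 1, p.2.2),
     (p.1 * (-p.2.2) * (c * γ), p.2.1 + γ - 1, p.2.2 - 1)])

def Good (L : List (ℝ × ℝ × ℝ)) : Prop :=
  ∀ p ∈ L, 0 ≤ p.1 ∧ p.2.1 ≤ 0 ∧ p.2.2 ≤ 0

theorem good_dL {c γ : ℝ} (hc : 0 ≤ c) (hγ0 : 0 ≤ γ) (hγ1 : γ ≤ 1)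
    {L : List (ℝ × ℝ × ℝ)} (hL : Good L) : Good (dL c γ L) := by
  intro p hp
  rw [dL, List.mem_flatMap] at hp
  obtain ⟨q, hq, hpq⟩ := hp
  obtain ⟨hA, ha, hb⟩ := hL q hq
  simp only [List.mem_cons, List.mem_singleton, List.not_mem_nil, or_false] at hpq
  rcases hpq with rfl | rfl
  · exact ⟨mul_nonneg hA (by linarith), by dsimp; constructor <;> linarith⟩
  · exact ⟨mul_nonneg (mul_nonneg hA (by linarith)) (mul_nonneg hc hγ0),
      by dsimp; constructor <;> linarith⟩

theorem F_nonneg {c γ : ℝ} (hc : 0 ≤ c) {t : ℝ} (ht : 0 < t)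
    {L : List (ℝ × ℝ × ℝ)} (hL : Good L) : 0 ≤ F c γ L t := by
  have hu : 0 < 1 + c * t ^ γ := by positivity
  apply List.sum_nonneg
  intro x hx
  rw [List.mem_map] at hx
  obtain ⟨p, hp, rfl⟩ := hx
  have := (hL p hp).1
  positivity

theorem hasDerivAt_F {c γ : ℝ} (hc : 0 < c) (hγ0 : 0 < γ) {t : ℝ} (ht : 0 < t)
    (L : List (ℝ × ℝ × ℝ)) :
    HasDerivAt (F c γ L) (-(F c γ (dL c γ L) t)) t := by
  induction L with
  | nil => exact (hasDerivAt_const t (0 : ℝ)).congr_deriv (by simp [F, dL])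
  | cons p L ih =>
    have hu : 0 < 1 + c * t ^ γ := by positivity
    have hg : HasDerivAt (fun s : ℝ => 1 + c * s ^ γ) (c * (γ * t ^ (γ - 1))) t :=
      ((Real.hasDerivAt_rpow_const (Or.inl ht.ne')).const_mul c).const_add 1
    have h1 : HasDerivAt (fun s : ℝ => p.1 * s ^ p.2.1)
        (p.1 * (p.2.1 * t ^ (p.2.1 - 1))) t :=
      (Real.hasDerivAt_rpow_const (Or.inl ht.ne')).const_mul p.1
    have h2 : HasDerivAt (fun s : ℝ => (1 + c * s ^ γ) ^ p.2.2)
        (c * (γ * t ^ (γ - 1)) * p.2.2 * (1 + c * t ^ γ) ^ (p.2.2 - 1)) t :=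
      hg.rpow_const (Or.inl hu.ne')
    have hterm := h1.mul h2
    have hsum := hterm.add ih
    have heq : (fun s : ℝ => F c γ (p :: L) s) =
        fun s : ℝ => (p.1 * s ^ p.2.1) * (1 + c * s ^ γ) ^ p.2.2 + F c γ L s := by
      funext s; simp [F, mul_assoc]
    rw [show F c γ (p :: L) = fun s => F c γ (p :: L) s from rfl, heq]
    convert hsum using 1
    · rfl
    · rfl
    · rfl
    have hdL : dL c γ (p :: L) =
        (p.1 * (-p.2.1), p.2.1 - 1, p.2.2) ::
        (p.1 * (-p.2.2) * (c * γ), p.2.1 + γ - 1, p.2.2 - 1) :: dL c γ L := by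
      simp [dL]
    rw [hdL]
    simp only [F, List.map_cons, List.sum_cons]
    have hst : t ^ (p.2.1 + γ - 1) = t ^ p.2.1 * t ^ (γ - 1) := by
      rw [← Real.rpow_add ht]; ring_nf
    rw [hst]
    have : F c γ (dL c γ L) t =
        (List.map (fun q => q.1 * t ^ q.2.1 * (1 + c * t ^ γ) ^ q.2.2) (dL c γ L)).sum := rfl
    rw [← this]
    ring

end OneAddRpowCM

open OneAddRpowCM in
/-- For `c > 0`, `0 < γ ≤ 1` and `ν > 0`, the function `t ↦ (1 + c t^γ)^(-ν)` is
completely monotone on `(0,∞)`. -/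
theorem one_add_rpow_neg_completelyMonotone (c γ ν : ℝ) (hc : 0 < c) (hγ0 : 0 < γ)
    (hγ1 : γ ≤ 1) (hν : 0 < ν) :
    CompletelyMonotone (fun t => (1 + c * t ^ γ) ^ (-ν)) := by
  constructor
  · intro t ht
    have hu : 0 < 1 + c * t ^ γ := by positivity
    have h1 : ContDiffAt ℝ (⊤ : ℕ∞) (fun s : ℝ => 1 + c * s ^ γ) t :=
      contDiffAt_const.add (contDiffAt_const.mul (Real.contDiffAt_rpow_const_of_ne ht.ne'))
    exact h1.rpow_const_of_ne hu.ne'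
  · set L0 : List (ℝ × ℝ × ℝ) := [(1, 0, -ν)] with hL0
    set Ln : ℕ → List (ℝ × ℝ × ℝ) := fun n => (dL c γ)^[n] L0 with hLn
    have hgood : ∀ n, Good (Ln n) := by
      intro n
      induction n with
      | zero => intro p hp; simp only [hLn, Function.iterate_zero, id, hL0,
          List.mem_singleton] at hp; subst hp; refine ⟨zero_le_one, le_refl 0, ?_⟩; dsimp; linarith
      | succ n ih =>
        have : Ln (n + 1) = dL c γ (Ln n) := by
          simp [hLn, Function.iterate_succ_apply']
        rw [this]
        exact good_dL hc.le hγ0.le hγ1 ih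
    have key : ∀ n, ∀ t > (0:ℝ),
        iteratedDeriv n (fun t => (1 + c * t ^ γ) ^ (-ν)) t = (-1 : ℝ) ^ n * F c γ (Ln n) t := by
      intro n
      induction n with
      | zero =>
        intro t ht
        simp [F, hLn, hL0, Real.rpow_zero]
      | succ n ih =>
        intro t ht
        rw [iteratedDeriv_succ]
        have hev : (iteratedDeriv n (fun t => (1 + c * t ^ γ) ^ (-ν)))
            =ᶠ[nhds t] fun s => (-1 : ℝ) ^ n * F c γ (Ln n) s := by
          filter_upwards [IsOpen.mem_nhds isOpen_Ioi ht] with s hs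
          exact ih s hs
        rw [hev.deriv_eq]
        have hd : HasDerivAt (fun s => (-1 : ℝ) ^ n * F c γ (Ln n) s)
            ((-1 : ℝ) ^ n * -(F c γ (dL c γ (Ln n)) t)) t :=
          (hasDerivAt_F hc hγ0 ht (Ln n)).const_mul _
        rw [hd.deriv]
        have : Ln (n + 1) = dL c γ (Ln n) := by
          simp [hLn, Function.iterate_succ_apply']
        rw [this]
        ring
    intro n t ht
    rw [key n t ht, ← mul_assoc, ← mul_pow]
    simpa using F_nonneg hc.le ht (hgood n)
end

section
/- For every a > 0, b > 1 and 0 < α ≤ 1, the function f(t) = ln(a t^α + b)/ln(b) is a Bernstein function on (0,∞). -/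
open Real Filter Set

noncomputable def bTerm (a b α : ℝ) (p : ℝ × ℝ × ℕ) (t : ℝ) : ℝ :=
  p.1 * t ^ p.2.1 / (a * t ^ α + b) ^ p.2.2

noncomputable def bSum (a b α : ℝ) (L : List (ℝ × ℝ × ℕ)) (t : ℝ) : ℝ :=
  (L.map (fun p => bTerm a b α p t)).sum

def bStep (a α : ℝ) (L : List (ℝ × ℝ × ℕ)) : List (ℝ × ℝ × ℕ) :=
  L.flatMap fun p =>
    [(-p.2.1 * p.1, p.2.1 - 1, p.2.2), (p.1 * p.2.2 * a * α, p.2.1 + α - 1, p.2.2 + 1)]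

lemma bTerm_hasDerivAt (a b α : ℝ) (ha : 0 < a) (hb : 0 < b) (p : ℝ × ℝ × ℕ)
    (hm : 1 ≤ p.2.2) {t : ℝ} (ht : 0 < t) :
    HasDerivAt (bTerm a b α p)
      (-(bTerm a b α (-p.2.1 * p.1, p.2.1 - 1, p.2.2) t
          + bTerm a b α (p.1 * p.2.2 * a * α, p.2.1 + α - 1, p.2.2 + 1) t)) t := by
  obtain ⟨c, β, m⟩ := p
  simp only at hm
  obtain ⟨k, rfl⟩ : ∃ k, m = k + 1 := ⟨m - 1, (Nat.succ_pred_eq_of_pos hm).symm⟩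
  have ht' : t ≠ 0 := ne_of_gt ht
  have htα : 0 < t ^ α := Real.rpow_pos_of_pos ht α
  have hU : 0 < a * t ^ α + b := by positivity
  have hu : HasDerivAt (fun t : ℝ => a * t ^ α + b) (a * (α * t ^ (α - 1))) t := by
    simpa using ((Real.hasDerivAt_rpow_const (Or.inl ht')).const_mul a).add_const b
  have hN : HasDerivAt (fun t : ℝ => c * t ^ β) (c * (β * t ^ (β - 1))) t :=
    (Real.hasDerivAt_rpow_const (Or.inl ht')).const_mul c
  have hD := hu.pow (k + 1)
  have h := hN.div hD (pow_ne_zero _ (ne_of_gt hU))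
  convert h using 1
  case e'_4 => rfl
  case e'_5 => rfl
  case e'_8 => rfl
  have e1 : t ^ (β - 1) = t ^ β / t := by rw [Real.rpow_sub ht, Real.rpow_one]
  have e2 : t ^ (β + α - 1) = t ^ β * t ^ α / t := by
    rw [Real.rpow_sub ht, Real.rpow_add ht, Real.rpow_one]
  have e3 : t ^ (α - 1) = t ^ α / t := by rw [Real.rpow_sub ht, Real.rpow_one]
  simp only [bTerm, e1, e2, e3, Nat.add_sub_cancel, Pi.pow_apply]
  have hUne : a * t ^ α + b ≠ 0 := ne_of_gt hU
  field_simp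
  ring

lemma bSum_hasDerivAt (a b α : ℝ) (ha : 0 < a) (hb : 0 < b) (L : List (ℝ × ℝ × ℕ))
    (hL : ∀ p ∈ L, 1 ≤ p.2.2) {t : ℝ} (ht : 0 < t) :
    HasDerivAt (bSum a b α L) (-(bSum a b α (bStep a α L) t)) t := by
  induction L with
  | nil => exact (hasDerivAt_const t (0 : ℝ)).congr_deriv (by simp [bSum, bStep])
  | cons p L ih =>
    have h1 := bTerm_hasDerivAt a b α ha hb p (hL p (by simp)) ht
    have h2 := ih (fun q hq => hL q (by simp [hq]))
    have h := h1.add h2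
    convert h using 1
    case e'_4 => rfl
    case e'_5 => rfl
    case e'_8 => rfl
    have hst : bStep a α (p :: L)
          = [(-p.2.1 * p.1, p.2.1 - 1, p.2.2), (p.1 * p.2.2 * a * α, p.2.1 + α - 1, p.2.2 + 1)]
            ++ bStep a α L := by
        simp [bStep, List.flatMap]
    rw [hst]
    simp only [bSum, List.map_append, List.sum_append, List.map_cons, List.map_nil,
      List.sum_cons, List.sum_nil]
    ring

lemma bSum_nonneg (a b α : ℝ) (ha : 0 < a) (hb : 0 < b) (L : List (ℝ × ℝ × ℕ))
    (hL : ∀ p ∈ L, 0 ≤ p.1) {t : ℝ} (ht : 0 < t) : 0 ≤ bSum a b α L t := by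
  unfold bSum
  apply List.sum_nonneg
  intro x hx
  simp only [List.mem_map] at hx
  obtain ⟨q, hq, rfl⟩ := hx
  have h1 : 0 < t ^ q.2.1 := Real.rpow_pos_of_pos ht _
  have htα : 0 < t ^ α := Real.rpow_pos_of_pos ht α
  have h2 : 0 < a * t ^ α + b := by positivity
  have h3 := hL q hq
  unfold bTerm
  positivity

lemma deriv_f_eq (a b α : ℝ) (ha : 0 < a) (hb : 1 < b) {t : ℝ} (ht : 0 < t) :
    deriv (fun t => Real.log (a * t ^ α + b) / Real.log b) t
      = bTerm a b α (a * α / Real.log b, α - 1, 1) t := by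
  have ht' : t ≠ 0 := ne_of_gt ht
  have htα : 0 < t ^ α := Real.rpow_pos_of_pos ht α
  have hb0 : (0:ℝ) < b := lt_trans one_pos hb
  have hU : 0 < a * t ^ α + b := by positivity
  have hlogb : 0 < Real.log b := Real.log_pos hb
  have hu : HasDerivAt (fun t : ℝ => a * t ^ α + b) (a * (α * t ^ (α - 1))) t := by
    simpa using ((Real.hasDerivAt_rpow_const (Or.inl ht')).const_mul a).add_const b
  have hlog := (Real.hasDerivAt_log (ne_of_gt hU)).comp t hu
  have h : HasDerivAt (fun t => Real.log (a * t ^ α + b) / Real.log b)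
      (((a * t ^ α + b)⁻¹ * (a * (α * t ^ (α - 1)))) / Real.log b) t := by
    simpa [Function.comp] using hlog.div_const (Real.log b)
  rw [h.deriv]
  simp only [bTerm, pow_one]
  field_simp

lemma key (a b α : ℝ) (ha : 0 < a) (hb : 1 < b) (hα0 : 0 < α) (hα1 : α ≤ 1) (n : ℕ) :
    ∃ L : List (ℝ × ℝ × ℕ),
      (∀ p ∈ L, 0 ≤ p.1 ∧ p.2.1 ≤ α - 1 ∧ 1 ≤ p.2.2) ∧
      ∀ t : ℝ, 0 < t →
        iteratedDeriv n (deriv (fun t => Real.log (a * t ^ α + b) / Real.log b)) t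
          = (-1 : ℝ) ^ n * bSum a b α L t := by
  have hb0 : (0:ℝ) < b := lt_trans one_pos hb
  have hlogb : 0 < Real.log b := Real.log_pos hb
  induction n with
  | zero =>
    refine ⟨[(a * α / Real.log b, α - 1, 1)], ?_, ?_⟩
    · intro p hp
      simp only [List.mem_singleton] at hp
      subst hp
      refine ⟨by positivity, le_refl _, le_refl _⟩
    · intro t ht
      simp only [iteratedDeriv_zero, pow_zero, one_mul]
      rw [deriv_f_eq a b α ha hb ht]
      simp [bSum]
  | succ n ih =>
    obtain ⟨L, hL, hfun⟩ := ih
    refine ⟨bStep a α L, ?_, ?_⟩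
    · intro q hq
      simp only [bStep, List.mem_flatMap, List.mem_cons, List.mem_singleton] at hq
      obtain ⟨p, hp, hq⟩ := hq
      obtain ⟨hc, hβ, hm⟩ := hL p hp
      rcases hq with rfl | rfl | h
      · exact ⟨mul_nonneg (by linarith) hc, by simp; linarith, hm⟩
      · refine ⟨by positivity, by simp; linarith, by simp⟩
      · simp at h
    · intro t ht
      rw [iteratedDeriv_succ]
      have hev : iteratedDeriv n (deriv (fun t => Real.log (a * t ^ α + b) / Real.log b))
          =ᶠ[nhds t] fun s => (-1 : ℝ) ^ n * bSum a b α L s := by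
        filter_upwards [isOpen_Ioi.mem_nhds (Set.mem_Ioi.mpr ht)] with s hs
        exact hfun s hs
      rw [hev.deriv_eq]
      have hL1 : ∀ p ∈ L, 1 ≤ p.2.2 := fun p hp => (hL p hp).2.2
      have hd := (bSum_hasDerivAt a b α ha hb0 L hL1 ht).const_mul ((-1 : ℝ) ^ n)
      rw [hd.deriv]
      rw [pow_succ]
      ring

/-- For `a > 0`, `b > 1` and `0 < α ≤ 1`, the function `f(t) = ln(a t^α + b)/ln b`
is a Bernstein function on `(0,∞)`. -/
theorem bernstein_log (a b α : ℝ) (ha : 0 < a) (hb : 1 < b) (hα0 : 0 < α)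
    (hα1 : α ≤ 1) :
    BernsteinFunction (fun t => Real.log (a * t ^ α + b) / Real.log b) := by
  have hb0 : (0:ℝ) < b := lt_trans one_pos hb
  have hlogb : 0 < Real.log b := Real.log_pos hb
  refine ⟨?_, ?_, ?_⟩
  · intro t ht
    have htα : 0 < t ^ α := Real.rpow_pos_of_pos ht α
    have h1 : 1 < a * t ^ α + b := by nlinarith
    exact div_pos (Real.log_pos h1) hlogb
  · intro t ht
    have hf : ContDiffOn ℝ (⊤ : ℕ∞) (fun t => Real.log (a * t ^ α + b) / Real.log b) (Set.Ioi 0) := by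
      intro s hs
      have hs0 : (0:ℝ) < s := hs
      have hsα : 0 < s ^ α := Real.rpow_pos_of_pos hs0 α
      have hU : 0 < a * s ^ α + b := by positivity
      have h1 : ContDiffAt ℝ (⊤ : ℕ∞) (fun t : ℝ => a * t ^ α + b) s :=
        (contDiffAt_const.mul (Real.contDiffAt_rpow_const_of_ne (ne_of_gt hs0))).add
          contDiffAt_const
      exact ((h1.log (ne_of_gt hU)).div_const _).contDiffWithinAt
    have hderiv := hf.deriv_of_isOpen (m := (⊤ : ℕ∞)) isOpen_Ioi (mod_cast le_top)
    exact (hderiv t ht).contDiffAt (isOpen_Ioi.mem_nhds ht)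
  · intro n t ht
    obtain ⟨L, hL, hfun⟩ := key a b α ha hb hα0 hα1 n
    rw [hfun t ht, ← mul_assoc, ← mul_pow]
    simp only [neg_mul, one_mul, neg_neg, one_pow]
    exact bSum_nonneg a b α ha hb0 L (fun p hp => (hL p hp).1) ht
end

section
/- If ψ : [0,π] → ℝ^{m×m} has the representation ψ(θ) = ∑_{n=0}^∞ B_n (cos θ)^n, where {B_n} is a sequence of symmetric positive semidefinite m×m matrices with ∑_n B_n summable entrywise, then the map (x,y) ↦ ψ(arccos⟨x,y⟩) is a matrix-valued positive definite function on the unit sphere S^d for every d ≥ 1. -/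
/-!
Fix unit vectors `x₁, …, x_N`. For each `n` the block matrix `(⟪x_ℓ, x_r⟫ⁿ B_n)_{ℓ,r}` is the
Kronecker product of the `n`-th Hadamard power of the Gram matrix of the `x_ℓ` (positive
semidefinite by the Schur product theorem) with `B_n`, hence positive semidefinite. Since
`|⟪x_ℓ, x_r⟫| ≤ 1`, the series `∑ₙ ⟪x_ℓ, x_r⟫ⁿ B_n` converges entrywise to
`ψ(arccos ⟪x_ℓ, x_r⟫)`, so the quadratic form is a convergent sum of nonnegative terms.
-/

open Matrix

namespace Matrix

variable {ι κ 𝕜 : Type*} [Fintype ι] [Fintype κ]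

open scoped ComplexOrder in
theorem PosSemidef.map_pow [RCLike 𝕜] {A : Matrix ι ι 𝕜} (hA : A.PosSemidef) (n : ℕ) :
    (A.map (· ^ n)).PosSemidef := by
  induction n with
  | zero =>
    classical
    convert posSemidef_vecMulVec_self_star (1 : ι → 𝕜) using 1
    ext i j
    simp [vecMulVec_apply]
  | succ n ih =>
    convert ih.hadamard hA using 1
    ext i j
    simp [pow_succ]

theorem PosSemidef.sum_kronecker_nonneg {G : Matrix ι ι ℝ} {B : Matrix κ κ ℝ}
    (hG : G.PosSemidef) (hB : B.PosSemidef) (a : ι → κ → ℝ) :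
    0 ≤ ∑ ℓ, ∑ r, ∑ i, ∑ j, a ℓ i * (G ℓ r * B i j) * a r j := by
  refine ((hG.kronecker hB).dotProduct_mulVec_nonneg (fun p => a p.1 p.2)).trans_eq ?_
  simp only [dotProduct, mulVec, kronecker_apply, Fintype.sum_prod_type, Finset.mul_sum,
    star_trivial]
  refine Finset.sum_congr rfl fun ℓ _ => ?_
  rw [Finset.sum_comm]
  refine Finset.sum_congr rfl fun r _ => Finset.sum_congr rfl fun i _ => ?_
  exact Finset.sum_congr rfl fun j _ => by ring

end Matrix

theorem summable_pow_mul_of_abs_le_one {t : ℝ} (ht : |t| ≤ 1) {b : ℕ → ℝ} (hb : Summable b) :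
    Summable (fun n => t ^ n * b n) :=
  hb.abs.of_norm_bounded fun n => by
    rw [Real.norm_eq_abs, abs_mul, abs_pow]
    exact mul_le_of_le_one_left (abs_nonneg _) (pow_le_one₀ (abs_nonneg t) ht)

theorem matrixPosDef_of_cos_series_general {m d : ℕ}
    (ψ : ℝ → Matrix (Fin m) (Fin m) ℝ)
    (B : ℕ → Matrix (Fin m) (Fin m) ℝ)
    (hB : ∀ n, (B n).PosSemidef)
    (hsum : ∀ i j, Summable (fun n => B n i j))
    (hrep : ∀ θ ∈ Set.Icc (0 : ℝ) Real.pi,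
      ∀ i j, ψ θ i j = ∑' n, (Real.cos θ) ^ n * B n i j) :
    ∀ (N : ℕ) (x : Fin N → EuclideanSpace ℝ (Fin (d + 1))),
      (∀ ℓ, ‖x ℓ‖ = 1) →
      ∀ a : Fin N → Fin m → ℝ,
        0 ≤ ∑ ℓ, ∑ r, ∑ i, ∑ j,
          a ℓ i * ψ (Real.arccos (inner ℝ (x ℓ) (x r))) i j * a r j := by
  intro N x hx a
  have hinner : ∀ ℓ r, |inner ℝ (x ℓ) (x r)| ≤ 1 := fun ℓ r =>
    (abs_real_inner_le_norm _ _).trans_eq (by rw [hx, hx, one_mul])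
  have hterm : ∀ ℓ r i j, HasSum (fun n => a ℓ i * (inner ℝ (x ℓ) (x r) ^ n * B n i j) * a r j)
      (a ℓ i * ψ (Real.arccos (inner ℝ (x ℓ) (x r))) i j * a r j) := by
    intro ℓ r i j
    rw [hrep _ ⟨Real.arccos_nonneg _, Real.arccos_le_pi _⟩,
      Real.cos_arccos (neg_le_of_abs_le (hinner ℓ r)) (le_of_abs_le (hinner ℓ r))]
    exact ((summable_pow_mul_of_abs_le_one (hinner ℓ r) (hsum i j)).hasSum.mul_left _).mul_right _
  refine (hasSum_sum fun ℓ _ => hasSum_sum fun r _ => hasSum_sum fun i _ =>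
    hasSum_sum fun j _ => hterm ℓ r i j).nonneg fun n => ?_
  exact ((posSemidef_gram ℝ x).map_pow n).sum_kronecker_nonneg (hB n) a

/-- If `ψ(θ) = ∑ₙ Bₙ (cos θ)^n` with `Bₙ` symmetric positive semidefinite and
entrywise summable, then `(x,y) ↦ ψ(arccos⟨x,y⟩)` is a matrix-valued positive
definite function on the unit sphere `S^d` for every `d ≥ 1`. -/
theorem matrixPosDef_of_cos_series {m d : ℕ} (hd : 1 ≤ d)
    (ψ : ℝ → Matrix (Fin m) (Fin m) ℝ)
    (B : ℕ → Matrix (Fin m) (Fin m) ℝ)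
    (hB : ∀ n, (B n).PosSemidef)
    (hsum : ∀ i j, Summable (fun n => B n i j))
    (hrep : ∀ θ ∈ Set.Icc (0 : ℝ) Real.pi,
      ∀ i j, ψ θ i j = ∑' n, (Real.cos θ) ^ n * B n i j) :
    ∀ (N : ℕ) (x : Fin N → EuclideanSpace ℝ (Fin (d + 1))),
      (∀ ℓ, ‖x ℓ‖ = 1) →
      ∀ a : Fin N → Fin m → ℝ,
        0 ≤ ∑ ℓ, ∑ r, ∑ i, ∑ j,
          a ℓ i * ψ (Real.arccos (inner ℝ (x ℓ) (x r))) i j * a r j :=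
  matrixPosDef_of_cos_series_general ψ B hB hsum hrep
end
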